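/- Let K be a number field with ring of integers O_K, let N ≥ 1, and let x = (x₁,…,x_N) ∈ (K^×)^N. Then the quantity M(x) = N(x₁)·N(x₂)⋯N(x_N) / N(⟨x₁,…,x_N⟩)^N is a positive integer, equal to the absolute norm of an integral ideal of O_K; moreover M(x) = 1 if and only if there exists λ ∈ K^× such that λ·x_i ∈ O_K^× for every i. -/

import Mathlib

open scoped BigOperators ENNReal NNReal nonZeroDivisors
open MeasureTheory NumberField NumberField.InfinitePlace NumberField.mixedEmbedding

noncomputable section

namespace Paper

attribute [local instance] Classical.propDecidable

variable (K : Type*) [Field K] [NumberField K]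

/-- The degree `d = [K:ℚ]`. -/
abbrev dK : ℕ := Module.finrank ℚ K

/-- The absolute value of the discriminant of `K`. -/
abbrev ΔK : ℕ := (NumberField.discr K).natAbs

/-- The trace quadratic form `Q(x) = Δ_K^{-2/d}·Tr(x·x̄)` on `K_ℝ ≅ ℝ^{r₁} × ℂ^{r₂}`. -/
def qK (x : mixedSpace K) : ℝ :=
  ((ΔK K : ℝ) ^ (-(2 : ℝ) / (dK K : ℝ))) *
    ((∑ w, x.1 w ^ 2) + 2 * ∑ w, Complex.normSq (x.2 w))

/-- `V(N)`, the volume of the Euclidean unit ball in dimension `N`. -/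
def vb (N : ℕ) : ℝ := Real.pi ^ ((N : ℝ) / 2) / Real.Gamma ((N : ℝ) / 2 + 1)

/-- The Lebesgue measure on `K_ℝ` associated with the quadratic form `qK`, i.e. the unique
Haar measure giving the unit ball of `qK` measure `V(d)`. -/
def μKR : Measure (mixedSpace K) :=
  ((ENNReal.ofReal (vb (dK K)) / volume {x : mixedSpace K | qK K x ≤ 1}).toNNReal : ℝ≥0) •
    (volume : Measure (mixedSpace K))

/-- The Euclidean space `K_ℝ^t`. -/
abbrev EK (t : ℕ) := Fin t → mixedSpace K

/-- The quadratic form on `K_ℝ^t`, the orthogonal sum of `t` copies of `qK`. -/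
def QE {t : ℕ} (x : EK K t) : ℝ := ∑ i, qK K (x i)

/-- The origin-centered ball of radius `R` in `K_ℝ^t`. -/
def ballK (t : ℕ) (R : ℝ) : Set (EK K t) := {x | QE K x ≤ R ^ 2}

/-- The Lebesgue measure on `K_ℝ^t`. -/
def μEK (t : ℕ) : Measure (EK K t) := Measure.pi fun _ => μKR K

/-- Diagonal multiplication action of an element of `K` on `K_ℝ^t`. -/
def actK {t : ℕ} (α : K) (x : EK K t) : EK K t := fun a => mixedEmbedding K α * x a

/-- `α` is a root of unity, i.e. a member of `μ_K`. -/
def IsRootOfUnity (α : K) : Prop := ∃ n : ℕ, 0 < n ∧ α ^ n = 1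

/-- `ω_K`, the number of roots of unity of `K`. -/
def ωK : ℕ := Nat.card {x : K // IsRootOfUnity K x}

/-- `N(x)`, the absolute norm of the fractional ideal generated by `x`, that is, the absolute
value of the field norm of `x` (with `N(0) = 0`). -/
def elemNorm (x : K) : ℚ := |Algebra.norm ℚ x|

/-- The fractional ideal `⟨x₁, …, x_M⟩ = 𝓞_K·x₁ + ⋯ + 𝓞_K·x_M`. -/
def spanFrac {M : ℕ} (α : Fin M → K) : FractionalIdeal (𝓞 K)⁰ K :=
  ∑ i, FractionalIdeal.spanSingleton (𝓞 K)⁰ (α i)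

/-- `D(α) = N(𝓞_K + α₁𝓞_K + ⋯ + α_M𝓞_K)⁻¹`, the absolute norm of the denominator ideal
of `α`. -/
def Dden {M : ℕ} (α : Fin M → K) : ℚ :=
  (FractionalIdeal.absNorm (1 + spanFrac K α))⁻¹

/-- `H_∞(α) = ∏_{σ : K → ℂ} max_{1 ≤ j ≤ M} max (1, |σ(α_j)|)`. -/
def Hinf {M : ℕ} (α : Fin M → K) : ℝ :=
  ∏ σ : K →+* ℂ, (Finset.univ.fold max 1 fun j => ‖σ (α j)‖)

/-- The absolute logarithmic Weil height of `α ∈ K^×`: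
`h(α) = (1/d)·(∑_σ log max(1,|σ(α)|) + log N(denominator ideal of α))`. -/
def wHeight (α : K) : ℝ :=
  (1 / (dK K : ℝ)) *
    ((∑ σ : K →+* ℂ, Real.log (max 1 ‖σ α‖)) +
      Real.log (Dden K (fun _ : Fin 1 => α)))


omit [NumberField K] in
private lemma coeIdeal_prod_eq {ι : Type*} (s : Finset ι) (f : ι → Ideal (𝓞 K)) :
    ((∏ i ∈ s, f i : Ideal (𝓞 K)) : FractionalIdeal (𝓞 K)⁰ K) =
      ∏ i ∈ s, (f i : FractionalIdeal (𝓞 K)⁰ K) :=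
  map_prod (FractionalIdeal.coeIdealHom (𝓞 K)⁰ K) f s

/-- `M(x) = N(x₁)⋯N(x_N)/N(⟨x₁,…,x_N⟩)^N` is the absolute norm of a nonzero integral ideal
(hence a positive integer), and it equals `1` if and only if the `x_i` are, up to a common
scalar in `K^×`, units of `𝓞_K`. -/
theorem Mx_norm_of_integral_ideal (N : ℕ) (hN : 1 ≤ N) (x : Fin N → K) (hx : ∀ j, x j ≠ 0) :
    (∃ I : Ideal (𝓞 K), I ≠ ⊥ ∧
        (∏ j, elemNorm K (x j)) / (FractionalIdeal.absNorm (spanFrac K x)) ^ N =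
          (Ideal.absNorm I : ℚ)) ∧
      ((∏ j, elemNorm K (x j)) / (FractionalIdeal.absNorm (spanFrac K x)) ^ N = 1 ↔
        ∃ lam : K, lam ≠ 0 ∧ ∀ j, ∃ u : (𝓞 K)ˣ, (algebraMap (𝓞 K) K u) = lam * x j) := by
  classical
  set J := spanFrac K x with hJdef
  have hxs : ∀ j, FractionalIdeal.spanSingleton (𝓞 K)⁰ (x j) ≠ 0 := fun j =>
    FractionalIdeal.spanSingleton_ne_zero_iff.mpr (hx j)
  have hle : ∀ j, FractionalIdeal.spanSingleton (𝓞 K)⁰ (x j) ≤ J := fun j => by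
    rw [hJdef, spanFrac, ← Finset.add_sum_erase _ _ (Finset.mem_univ j),
      ← FractionalIdeal.sup_eq_add]
    exact le_sup_left
  have j₀ : Fin N := ⟨0, hN⟩
  have hJ : J ≠ 0 := fun h =>
    hxs j₀ (le_antisymm (h ▸ hle j₀) (FractionalIdeal.zero_le _))
  have hJinv : J⁻¹ ≠ 0 := inv_ne_zero hJ
  set a : Fin N → FractionalIdeal (𝓞 K)⁰ K :=
    fun j => FractionalIdeal.spanSingleton (𝓞 K)⁰ (x j) * J⁻¹ with ha_def
  have ha1 : ∀ j, a j ≤ 1 := fun j => by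
    calc a j ≤ J * J⁻¹ := mul_left_mono (a := J⁻¹) (hle j)
    _ = 1 := mul_inv_cancel₀ hJ
  have haz : ∀ j, a j ≠ 0 := fun j => mul_ne_zero (hxs j) hJinv
  choose I hI using fun j => FractionalIdeal.le_one_iff_exists_coeIdeal.mp (ha1 j)
  have hFI : ((∏ j, I j : Ideal (𝓞 K)) : FractionalIdeal (𝓞 K)⁰ K) = ∏ j, a j := by
    rw [coeIdeal_prod_eq]
    exact Finset.prod_congr rfl fun j _ => hI j
  have hnorm : FractionalIdeal.absNorm (∏ j, a j) =
      (∏ j, elemNorm K (x j)) / (FractionalIdeal.absNorm J) ^ N := by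
    rw [map_prod]
    have : ∀ j, FractionalIdeal.absNorm (a j) =
        elemNorm K (x j) * (FractionalIdeal.absNorm J)⁻¹ := fun j => by
      rw [ha_def, map_mul, map_inv₀, FractionalIdeal.absNorm_span_singleton]
      rfl
    rw [Finset.prod_congr rfl fun j _ => this j, Finset.prod_mul_distrib,
      Finset.prod_const, Finset.card_univ, Fintype.card_fin, div_eq_mul_inv, inv_pow]
  have hratio : (∏ j, elemNorm K (x j)) / (FractionalIdeal.absNorm J) ^ N =
      (Ideal.absNorm (∏ j, I j) : ℚ) := by
    rw [← hnorm, ← hFI, FractionalIdeal.coeIdeal_absNorm]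
  constructor
  · refine ⟨∏ j, I j, ?_, hratio⟩
    intro hbot
    have : ((∏ j, I j : Ideal (𝓞 K)) : FractionalIdeal (𝓞 K)⁰ K) = 0 := by
      rw [hbot]; simp
    rw [hFI] at this
    exact Finset.prod_ne_zero_iff.mpr (fun j _ => haz j) this
  · constructor
    · intro h1
      have hI1 : Ideal.absNorm (∏ j, I j) = 1 := by
        have := hratio.symm.trans h1
        exact_mod_cast this
      have hprod1 : ∏ j, a j = 1 := by
        rw [← hFI, Ideal.absNorm_eq_one_iff.mp hI1]
        simp
      have haj : ∀ j, a j = 1 := by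
        intro j
        refine le_antisymm (ha1 j) ?_
        have herase : ∏ i ∈ Finset.univ.erase j, a i ≤ 1 := by
          have : ((∏ i ∈ Finset.univ.erase j, I i : Ideal (𝓞 K)) :
              FractionalIdeal (𝓞 K)⁰ K) = ∏ i ∈ Finset.univ.erase j, a i := by
            rw [coeIdeal_prod_eq]
            exact Finset.prod_congr rfl fun i _ => hI i
          rw [← this]
          exact FractionalIdeal.coeIdeal_le_one
        calc (1 : FractionalIdeal (𝓞 K)⁰ K)
            = a j * ∏ i ∈ Finset.univ.erase j, a i := by
              rw [← hprod1, Finset.mul_prod_erase _ _ (Finset.mem_univ j)]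
          _ ≤ a j * 1 := mul_right_mono (a := a j) herase
          _ = a j := mul_one _
      have hspan : ∀ j, FractionalIdeal.spanSingleton (𝓞 K)⁰ (x j) = J := fun j =>
        (mul_inv_eq_one₀ hJ).mp (haj j)
      have hxx : ∀ j, FractionalIdeal.spanSingleton (𝓞 K)⁰ (x j) =
          FractionalIdeal.spanSingleton (𝓞 K)⁰ (x j₀) := fun j =>
        (hspan j).trans (hspan j₀).symm
      refine ⟨(x j₀)⁻¹, inv_ne_zero (hx j₀), fun j => ?_⟩
      obtain ⟨u, hu⟩ := FractionalIdeal.spanSingleton_eq_spanSingleton.mp (hxx j).symm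
      refine ⟨u, ?_⟩
      have hu' : algebraMap (𝓞 K) K u * x j₀ = x j := by
        rw [← hu, Units.smul_def, Algebra.smul_def]
      rw [← hu']
      field_simp [hx j₀]
    · rintro ⟨lam, hlam, hu⟩
      have hspan : ∀ j, FractionalIdeal.spanSingleton (𝓞 K)⁰ (x j) =
          FractionalIdeal.spanSingleton (𝓞 K)⁰ lam⁻¹ := by
        intro j
        obtain ⟨u, hu⟩ := hu j
        have hx' : x j = lam⁻¹ * algebraMap (𝓞 K) K u := by
          rw [hu]; field_simp
        rw [hx', ← FractionalIdeal.spanSingleton_mul_spanSingleton,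
          ← FractionalIdeal.coeIdeal_span_singleton,
          Ideal.span_singleton_eq_top.mpr u.isUnit, FractionalIdeal.coeIdeal_top, mul_one]
      have hidem : ∀ (c : FractionalIdeal (𝓞 K)⁰ K) (n : ℕ), 1 ≤ n → n • c = c := by
        intro c n hn
        induction n with
        | zero => omega
        | succ m ih =>
          rcases Nat.eq_or_lt_of_le hn with h | h
          · rw [← h, one_smul]
          · have hm : 1 ≤ m := by omega
            rw [succ_nsmul, ih hm, ← FractionalIdeal.sup_eq_add, sup_idem]
      have hJ' : J = FractionalIdeal.spanSingleton (𝓞 K)⁰ lam⁻¹ := by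
        rw [hJdef, spanFrac, Finset.sum_congr rfl fun j _ => hspan j, Finset.sum_const,
          Finset.card_univ, Fintype.card_fin]
        exact hidem _ N hN
      have hNJ : FractionalIdeal.absNorm J ≠ 0 := fun h =>
        hJ (FractionalIdeal.absNorm_eq_zero_iff.mp h)
      have : ∏ j, elemNorm K (x j) = (FractionalIdeal.absNorm J) ^ N := by
        have : ∀ j, elemNorm K (x j) = FractionalIdeal.absNorm J := fun j => by
          rw [hJ', ← hspan j, FractionalIdeal.absNorm_span_singleton]; rfl
        rw [Finset.prod_congr rfl fun j _ => this j, Finset.prod_const, Finset.card_univ,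
          Fintype.card_fin]
      rw [this, div_self (pow_ne_zero _ hNJ)]

end Paper
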